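/- arXiv:2412.10562 — 3 statements merged into one kernel-verified Lean document; each statement's English description precedes it below -/
import Mathlib

section
/- Let n ≥ 1 and let μ ∈ ℤ^{n+1}. Then either μ_{n+1} − μ_n = 1 (equivalently, for the transposition s_n exchanging the n-th and (n+1)-st coordinates one has s_n·μ = μ + α_n), or there exists a permutation σ ∈ S_{n+1} such that both σ·μ and σ·(μ + α_n) are weakly decreasing sequences. -/
/-- The root `α_n = e_n − e_{n+1}` of type `A_n` (here `n = m+1`, coordinates indexed by
`Fin (m+2)`, `0`-indexed: `e_m − e_{m+1}`). -/
def alphaN (m : ℕ) : Fin (m + 2) → ℤ :=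
  Pi.single (Fin.castSucc (Fin.last m)) 1 - Pi.single (Fin.last (m + 1)) 1

/-- For any weight `μ ∈ ℤ^{n+1}` (with `n = m+1 ≥ 1`): either `μ_{n+1} − μ_n = 1`
(i.e. `s_n·μ = μ + α_n`) or some permutation `σ` makes both `σ·μ` and `σ·(μ + α_n)`
weakly decreasing. -/
theorem exists_perm_dominant_both (m : ℕ) (μ : Fin (m + 2) → ℤ) :
    μ (Fin.last (m + 1)) - μ (Fin.castSucc (Fin.last m)) = 1 ∨
    ∃ σ : Equiv.Perm (Fin (m + 2)),
      Antitone (fun i => μ (σ i)) ∧ Antitone (fun i => (μ + alphaN m) (σ i)) := by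
  set p := Fin.castSucc (Fin.last m) with hp
  set q := Fin.last (m + 1) with hq
  rcases eq_or_ne (μ q - μ p) 1 with h | h
  · exact Or.inl h
  right
  have hpq : p ≠ q := (Fin.castSucc_lt_last _).ne
  have hqp : Fin.last (m + 1) ≠ Fin.castSucc (Fin.last m) := (Fin.castSucc_lt_last _).ne'
  have hα : ∀ i, alphaN m i = if i = p then 1 else if i = q then -1 else 0 := by
    intro i
    simp only [alphaN, Pi.sub_apply, Pi.single_apply]
    split_ifs with h1 h2 h2 <;> simp_all
  have key : ∀ a b : Fin (m + 2),
      2 * μ a + alphaN m a ≤ 2 * μ b + alphaN m b →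
      μ a ≤ μ b ∧ μ a + alphaN m a ≤ μ b + alphaN m b := by
    intro a b hab
    constructor
    · rw [hα a, hα b] at hab
      split_ifs at hab <;> subst_vars <;> omega
    · rw [hα a, hα b] at hab ⊢
      split_ifs at hab ⊢ <;> subst_vars <;> omega
  refine ⟨Tuple.sort (fun x => -(2 * μ x + alphaN m x)), ?_, ?_⟩
  · intro i j hij
    have hs := Tuple.monotone_sort (fun x => -(2 * μ x + alphaN m x)) hij
    simp only [Function.comp_apply, neg_le_neg_iff] at hs
    exact (key _ _ hs).1
  · intro i j hij
    have hs := Tuple.monotone_sort (fun x => -(2 * μ x + alphaN m x)) hij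
    simp only [Function.comp_apply, neg_le_neg_iff] at hs
    simpa using (key _ _ hs).2
end

section
/- Let n ≥ 1, let ν ∈ ℤ^{n+1} be dominant (weakly decreasing), and let γ = α_{j,k} be a positive root of type A_n such that ν − γ is dominant. Suppose ν − γ is not covered by ν in the dominance order on dominant weights, i.e., there exists a dominant ξ ∈ ℤ^{n+1} with ν − γ < ξ < ν in dominance order. Then there exist positive roots α, β of type A_n with α + β = γ such that ν − α is dominant. -/
open scoped BigOperators

/-- A positive root of type `A_n`: `α_{j,k} = e_j − e_{k+1}` for `1 ≤ j ≤ k ≤ n`,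
i.e. a vector `e_a − e_b` with `a < b` in `Fin (n+1)` (`0`-indexed). -/
def IsPosRootA (n : ℕ) (v : Fin (n + 1) → ℤ) : Prop :=
  ∃ a b : Fin (n + 1), a < b ∧ v = Pi.single a 1 - Pi.single b 1

/-- The dominance order on `ℤ^{n+1}`: `μ ≤ μ'` iff `μ' − μ` is a nonnegative integer
combination of the simple roots `α_1, …, α_n`. -/
def domLE (n : ℕ) (μ μ' : Fin (n + 1) → ℤ) : Prop :=
  ∃ c : Fin n → ℕ, μ' - μ =
    ∑ i : Fin n, (c i : ℤ) • (Pi.single (Fin.castSucc i) (1 : ℤ) - Pi.single i.succ 1)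

/-- Partial sums of the coordinates of a vector. -/
def Psum (n : ℕ) (v : Fin (n+1) → ℤ) (m : ℕ) : ℤ :=
  ∑ j ∈ Finset.univ.filter (fun j : Fin (n+1) => (j:ℕ) < m), v j

lemma Psum_sub (n : ℕ) (v w : Fin (n+1) → ℤ) (m : ℕ) :
    Psum n (v - w) m = Psum n v m - Psum n w m := by
  simp [Psum, Finset.sum_sub_distrib]

lemma Psum_entry (n : ℕ) (v : Fin (n+1) → ℤ) (j : Fin (n+1)) :
    v j = Psum n v ((j:ℕ)+1) - Psum n v (j:ℕ) := by
  have h : Finset.univ.filter (fun i : Fin (n+1) => (i:ℕ) < (j:ℕ)+1)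
      = insert j (Finset.univ.filter (fun i : Fin (n+1) => (i:ℕ) < (j:ℕ))) := by
    ext i
    simp [Fin.ext_iff]
    omega
  rw [Psum, h, Finset.sum_insert (by simp)]
  simp [Psum]

lemma Psum_single (n : ℕ) (p : Fin (n+1)) (m : ℕ) :
    Psum n (Pi.single p (1:ℤ)) m = if (p:ℕ) < m then 1 else 0 := by
  rw [Psum]
  rw [Finset.sum_congr rfl (fun j _ => Pi.single_apply p (1:ℤ) j)]
  rw [Finset.sum_ite_eq' ]
  simp

lemma Psum_combo (n : ℕ) (c : Fin n → ℕ) (m : ℕ) :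
    Psum n (∑ i : Fin n, (c i:ℤ) • (Pi.single (Fin.castSucc i) (1:ℤ) - Pi.single i.succ 1)) m
    = ∑ i : Fin n, (c i : ℤ) * ((if (i:ℕ) < m then 1 else 0) - (if (i:ℕ)+1 < m then 1 else 0)) := by
  rw [Psum]
  simp only [Finset.sum_apply]
  rw [Finset.sum_comm]
  refine Finset.sum_congr rfl (fun i _ => ?_)
  simp only [Pi.smul_apply, Pi.sub_apply, smul_eq_mul, Pi.single_apply, mul_sub,
    Finset.sum_sub_distrib, mul_ite, mul_one, mul_zero, Finset.sum_ite_eq', Finset.mem_filter,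
    Finset.mem_univ, true_and, Fin.coe_castSucc, Fin.val_succ]

lemma Psum_combo_nonneg (n : ℕ) (c : Fin n → ℕ) (m : ℕ) :
    0 ≤ Psum n (∑ i : Fin n, (c i:ℤ) • (Pi.single (Fin.castSucc i) (1:ℤ) - Pi.single i.succ 1)) m := by
  rw [Psum_combo]
  exact Finset.sum_nonneg fun i _ =>
    mul_nonneg (Int.natCast_nonneg _) (by split_ifs <;> omega)

lemma Psum_combo_ge (n : ℕ) (c : Fin n → ℕ) (i₀ : Fin n) :
    (c i₀ : ℤ) ≤ Psum n (∑ i : Fin n, (c i:ℤ) • (Pi.single (Fin.castSucc i) (1:ℤ) - Pi.single i.succ 1)) ((i₀:ℕ)+1) := by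
  rw [Psum_combo]
  have h := Finset.single_le_sum
    (f := fun i : Fin n => (c i:ℤ) * ((if (i:ℕ) < (i₀:ℕ)+1 then 1 else 0) - (if (i:ℕ)+1 < (i₀:ℕ)+1 then 1 else 0)))
    (fun i _ => mul_nonneg (Int.natCast_nonneg _) (by split_ifs <;> omega))
    (Finset.mem_univ i₀)
  simpa using h

lemma antitone_sub_root (n : ℕ) (ν : Fin (n+1) → ℤ) (hν : Antitone ν)
    (p q : Fin (n+1)) (hpq : (p:ℕ) < (q:ℕ))
    (h1 : ∀ j : Fin (n+1), (j:ℕ) = (p:ℕ)+1 → ν j + (if (j:ℕ) = (q:ℕ) then 1 else 0) ≤ ν p - 1)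
    (h2 : ∀ j : Fin (n+1), (j:ℕ)+1 = (q:ℕ) → (p:ℕ) < (j:ℕ) → ν q + 1 ≤ ν j) :
    Antitone (ν - (Pi.single p 1 - Pi.single q 1)) := by
  have hp1 : p ≠ q := by rw [Ne, Fin.ext_iff]; omega
  have hp2 : q ≠ p := by rw [Ne, Fin.ext_iff]; omega
  rw [Fin.antitone_iff_succ_le]
  intro i
  have hnu : ν i.succ ≤ ν i.castSucc := hν (Fin.castSucc_le_succ i)
  simp only [Pi.sub_apply, Pi.single_apply]
  rcases Nat.lt_trichotomy (i:ℕ) (p:ℕ) with h|h|h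
  · have c1 : i.castSucc ≠ p := by rw [Ne, Fin.ext_iff]; simp; omega
    have c2 : i.castSucc ≠ q := by rw [Ne, Fin.ext_iff]; simp; omega
    have c3 : i.succ ≠ q := by rw [Ne, Fin.ext_iff]; simp; omega
    by_cases c4 : i.succ = p
    · have hup : ν p ≤ ν i.castSucc := by
        rw [← c4]; exact hnu
      simp [c1, c2, c3, c4, hp1, hp2]
      linarith
    · simp [c1, c2, c3, c4, hp1, hp2]
      linarith
  · have c1 : i.castSucc = p := by rw [Fin.ext_iff]; simp; omega
    have c2 : i.castSucc ≠ q := by rw [Ne, Fin.ext_iff]; simp; omega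
    have c3 : i.succ ≠ p := by rw [Ne, Fin.ext_iff]; simp; omega
    have hh := h1 i.succ (by simp; omega)
    by_cases c4 : i.succ = q
    · rw [if_pos (by rw [c4])] at hh
      rw [c4] at hh
      simp [c1, c2, c3, c4, hp1, hp2]
      linarith
    · rw [if_neg (by rw [Fin.val_succ]; intro hc; exact c4 (by rw [Fin.ext_iff]; simpa using hc))] at hh
      simp [c1, c2, c3, c4, hp1, hp2]
      linarith
  · have c1 : i.castSucc ≠ p := by rw [Ne, Fin.ext_iff]; simp; omega
    have c3 : i.succ ≠ p := by rw [Ne, Fin.ext_iff]; simp; omega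
    rcases Nat.lt_trichotomy ((i:ℕ)+1) (q:ℕ) with h'|h'|h'
    · have c2 : i.castSucc ≠ q := by rw [Ne, Fin.ext_iff]; simp; omega
      have c4 : i.succ ≠ q := by rw [Ne, Fin.ext_iff]; simp; omega
      simp [c1, c2, c3, c4, hp1, hp2]
      linarith
    · have c2 : i.castSucc ≠ q := by rw [Ne, Fin.ext_iff]; simp; omega
      have c4 : i.succ = q := by rw [Fin.ext_iff]; simp; omega
      have hh := h2 i.castSucc (by simp; omega) (by simp; omega)
      simp [c1, c2, c3, c4, hp1, hp2]
      linarith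
    · have c4 : i.succ ≠ q := by rw [Ne, Fin.ext_iff]; simp; omega
      by_cases c2 : i.castSucc = q
      · have : ν i.succ ≤ ν q := by rw [← c2]; exact hnu
        simp [c1, c2, c3, c4, hp1, hp2]
        linarith
      · simp [c1, c2, c3, c4, hp1, hp2]
        linarith

lemma core_decomp (n : ℕ) (ν : Fin (n+1) → ℤ) (hν : Antitone ν) (a b : Fin (n+1)) (hab : (a:ℕ) < (b:ℕ))
    (d : ℕ → ℤ)
    (hd0 : ∀ m, 0 ≤ d m) (hd1 : ∀ m, d m ≤ 1)
    (hdout : ∀ m, m ≤ (a:ℕ) ∨ (b:ℕ) < m → d m = 0)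
    (hstar : ∀ j j' : Fin (n+1), (j:ℕ)+1 = (j':ℕ) →
      2*d ((j:ℕ)+1) - d (j:ℕ) - d ((j:ℕ)+2) ≤ ν j - ν j')
    (hgap : ∀ j : Fin (n+1), (j:ℕ) = (a:ℕ)+1 → (a:ℕ)+1 < (b:ℕ) → ν j + 1 ≤ ν a)
    (m1 : ℕ) (hm1 : d m1 = 1)
    (m0 : ℕ) (hm0a : (a:ℕ) < m0) (hm0b : m0 ≤ (b:ℕ)) (hm0 : d m0 = 0) :
    ∃ α β : Fin (n + 1) → ℤ, IsPosRootA n α ∧ IsPosRootA n β ∧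
      α + β = (Pi.single a 1 - Pi.single b 1) ∧ Antitone (ν - α) := by
  classical
  have hbn : (b:ℕ) ≤ n := by have := b.isLt; omega
  have hm1ab : (a:ℕ) < m1 ∧ m1 ≤ (b:ℕ) := by
    by_contra hcon
    have := hdout m1 (by omega)
    omega
  by_cases hcase : d (b:ℕ) = 0
  · -- Case 1 : α = e_a - e_k
    set P : ℕ → Prop := fun j => d j ≠ 0 with hP
    set k := Nat.findGreatest P (b:ℕ) with hk
    have hkP : P k := Nat.findGreatest_spec hm1ab.2 (by simp [hP, hm1])
    have hkle : k ≤ (b:ℕ) := Nat.findGreatest_le _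
    have hkd : d k = 1 := by have := hd0 k; have := hd1 k; simp [hP] at hkP; omega
    have hka : (a:ℕ) < k ∧ k ≤ (b:ℕ) := by
      by_contra hcon
      have := hdout k (by omega)
      omega
    have hkB : k < (b:ℕ) := by
      rcases lt_or_eq_of_le hkle with h | h
      · exact h
      · rw [h] at hkd; omega
    have hk1 : d (k+1) = 0 := by
      have := Nat.findGreatest_is_greatest (P := P) (n := (b:ℕ))
        (by omega : Nat.findGreatest P (b:ℕ) < k+1) (by omega)
      simp [hP] at this
      exact this
    set q : Fin (n+1) := ⟨k, by omega⟩ with hq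
    have hqv : (q:ℕ) = k := rfl
    refine ⟨Pi.single a 1 - Pi.single q 1, Pi.single q 1 - Pi.single b 1,
      ⟨a, q, by rw [Fin.lt_def]; omega, rfl⟩,
      ⟨q, b, by rw [Fin.lt_def]; simp [hqv]; omega, rfl⟩, by abel, ?_⟩
    apply antitone_sub_root n ν hν a q (by omega)
    · -- h1
      intro j hj
      by_cases hkA : k = (a:ℕ)+1
      · rw [if_pos (by omega)]
        have hI := hstar a j (by omega)
        have e0 : d ((a:ℕ)) = 0 := hdout _ (by omega)
        have e1 : d ((a:ℕ)+1) = 1 := by rw [← hkA] at *; exact hkd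
        have e2 : d ((a:ℕ)+2) = 0 := by
          have : (a:ℕ)+2 = k+1 := by omega
          rw [this]; exact hk1
        linarith
      · rw [if_neg (by omega)]
        have := hgap j hj (by omega)
        linarith
    · -- h2
      intro j hj hj2
      have hI := hstar j q (by omega)
      rw [show (j:ℕ)+1 = k from by omega, show (j:ℕ)+2 = k+1 from by omega] at hI
      have := hd0 (j:ℕ); have := hd1 (j:ℕ)
      rw [show (j:ℕ) = k - 1 from by omega] at *
      linarith
  · -- Case 2 : α = e_k - e_b
    set P : ℕ → Prop := fun j => (a:ℕ) < j ∧ d j = 0 with hP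
    set k := Nat.findGreatest P (b:ℕ) with hk
    have hkP : P k := Nat.findGreatest_spec hm0b (by simp [hP]; exact ⟨hm0a, hm0⟩)
    have hkle : k ≤ (b:ℕ) := Nat.findGreatest_le _
    simp only [hP] at hkP
    have hkB : k < (b:ℕ) := by
      rcases lt_or_eq_of_le hkle with h | h
      · exact h
      · rw [h] at hkP; omega
    have hk1 : d (k+1) = 1 := by
      have := Nat.findGreatest_is_greatest (P := P) (n := (b:ℕ))
        (by omega : Nat.findGreatest P (b:ℕ) < k+1) (by omega)
      simp [hP] at this
      have h2 := this (by omega)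
      have := hd0 (k+1); have := hd1 (k+1)
      omega
    have hdB1 : d (b:ℕ) = 1 := by have := hd0 (b:ℕ); have := hd1 (b:ℕ); omega
    have hdB2 : d ((b:ℕ)+1) = 0 := hdout _ (by omega)
    set p : Fin (n+1) := ⟨k, by omega⟩ with hp
    have hpv : (p:ℕ) = k := rfl
    refine ⟨Pi.single p 1 - Pi.single b 1, Pi.single a 1 - Pi.single p 1,
      ⟨p, b, by rw [Fin.lt_def]; simp [hpv]; omega, rfl⟩,
      ⟨a, p, by rw [Fin.lt_def]; simp [hpv]; omega, rfl⟩, by abel, ?_⟩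
    apply antitone_sub_root n ν hν p b (by simp [hpv]; omega)
    · -- h1
      intro j hj
      rw [hpv] at hj
      have hI := hstar p j (by omega)
      rw [hpv, show k+1 = (j:ℕ) from hj.symm, show k+2 = (j:ℕ)+1 from by omega] at hI
      have hdj : d (j:ℕ) = 1 := by rw [hj]; exact hk1
      by_cases he : (j:ℕ) = (b:ℕ)
      · rw [if_pos he]
        have hz : d ((j:ℕ)+1) = 0 := by rw [he]; exact hdB2
        linarith [hkP.2]
      · rw [if_neg he]
        have := hd0 ((j:ℕ)+1); have := hd1 ((j:ℕ)+1)
        linarith [hkP.2]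
    · -- h2
      intro j hj hj2
      have hI := hstar j b (by omega)
      rw [show (j:ℕ)+1 = (b:ℕ) from by omega, show (j:ℕ)+2 = (b:ℕ)+1 from by omega] at hI
      have := hd0 (j:ℕ); have := hd1 (j:ℕ)
      linarith

/-- If `ν` is dominant, `γ` is a positive root with `ν − γ` dominant, and `ν − γ` is not
covered by `ν` in the dominance order on dominant weights (witnessed by a dominant `ξ`
strictly between them), then `γ = α + β` for positive roots `α, β` with `ν − α` dominant. -/
theorem exists_posRoot_decomposition (n : ℕ) (hn : 1 ≤ n)
    (ν γ : Fin (n + 1) → ℤ) (hν : Antitone ν)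
    (hγ : IsPosRootA n γ) (hdom : Antitone (ν - γ))
    (ξ : Fin (n + 1) → ℤ) (hξ : Antitone ξ)
    (h1 : domLE n (ν - γ) ξ ∧ ν - γ ≠ ξ) (h2 : domLE n ξ ν ∧ ξ ≠ ν) :
    ∃ α β : Fin (n + 1) → ℤ, IsPosRootA n α ∧ IsPosRootA n β ∧ α + β = γ ∧
      Antitone (ν - α) := by
  classical
  obtain ⟨a, b, hab, hγeq⟩ := hγ
  obtain ⟨C1, hC1⟩ := h1.1
  obtain ⟨C2, hC2⟩ := h2.1
  have habv : (a:ℕ) < (b:ℕ) := hab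
  set d : ℕ → ℤ := fun m => Psum n (ν - ξ) m with hd_def
  have hdd : ∀ m, Psum n (ν - ξ) m = d m := fun _ => rfl
  have hdc : ∀ m, d m = Psum n (∑ i : Fin n, (C2 i : ℤ) •
      (Pi.single (Fin.castSucc i) (1:ℤ) - Pi.single i.succ 1)) m := by
    intro m
    rw [← hdd m, hC2]
  have hgval : ∀ m, Psum n γ m
      = (if (a:ℕ) < m then (1:ℤ) else 0) - (if (b:ℕ) < m then 1 else 0) := by
    intro m
    rw [hγeq, Psum_sub, Psum_single, Psum_single]
  have hd0 : ∀ m, 0 ≤ d m := fun m => by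
    rw [hdc m]; exact Psum_combo_nonneg n C2 m
  have eflip : γ - (ν - ξ) = ξ - (ν - γ) := by abel
  have hdg : ∀ m, d m ≤ Psum n γ m := by
    intro m
    have h0 : 0 ≤ Psum n (ξ - (ν - γ)) m := by
      rw [hC1]; exact Psum_combo_nonneg n C1 m
    rw [← eflip, Psum_sub, hdd] at h0
    linarith
  have hd1 : ∀ m, d m ≤ 1 := by
    intro m
    have h := hdg m
    rw [hgval m] at h
    split_ifs at h <;> omega
  have hdout : ∀ m, m ≤ (a:ℕ) ∨ (b:ℕ) < m → d m = 0 := by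
    intro m hm
    have h := hdg m
    have h0 := hd0 m
    rw [hgval m] at h
    split_ifs at h <;> omega
  have hstar : ∀ j j' : Fin (n+1), (j:ℕ)+1 = (j':ℕ) →
      2*d ((j:ℕ)+1) - d (j:ℕ) - d ((j:ℕ)+2) ≤ ν j - ν j' := by
    intro j j' hjj'
    have e1 := Psum_entry n (ν - ξ) j
    have e2 := Psum_entry n (ν - ξ) j'
    rw [Pi.sub_apply] at e1 e2
    rw [← hjj'] at e2
    rw [show (j:ℕ)+1+1 = (j:ℕ)+2 from by omega] at e2
    rw [hdd, hdd] at e1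
    rw [hdd, hdd] at e2
    have hle : ξ j' ≤ ξ j := hξ (by rw [Fin.le_def]; omega)
    linarith
  have hgap : ∀ j : Fin (n+1), (j:ℕ) = (a:ℕ)+1 → (a:ℕ)+1 < (b:ℕ) → ν j + 1 ≤ ν a := by
    intro j hj hab2
    have hle : (ν - γ) j ≤ (ν - γ) a := hdom (by rw [Fin.le_def]; omega)
    rw [hγeq] at hle
    have c1 : j ≠ a := by rw [Ne, Fin.ext_iff]; omega
    have c2 : j ≠ b := by rw [Ne, Fin.ext_iff]; omega
    have c3 : a ≠ b := by rw [Ne, Fin.ext_iff]; omega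
    simp only [Pi.sub_apply, Pi.single_apply, if_neg c1, if_neg c2, if_neg c3, if_true] at hle
    linarith
  have hex2 : ∃ i : Fin n, C2 i ≠ 0 := by
    by_contra hall
    push_neg at hall
    apply h2.2
    have hz : ν - ξ = 0 := by rw [hC2]; simp [hall]
    exact (sub_eq_zero.mp hz).symm
  obtain ⟨i2, hi2⟩ := hex2
  have hm1' : 1 ≤ d ((i2:ℕ)+1) := by
    rw [hdc _]
    have h := Psum_combo_ge n C2 i2
    have h1' : (1:ℤ) ≤ (C2 i2:ℤ) := by exact_mod_cast Nat.one_le_iff_ne_zero.mpr hi2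
    linarith
  have hm1 : d ((i2:ℕ)+1) = 1 := le_antisymm (hd1 _) hm1'
  have hex1 : ∃ i : Fin n, C1 i ≠ 0 := by
    by_contra hall
    push_neg at hall
    apply h1.2
    have hz : ξ - (ν - γ) = 0 := by rw [hC1]; simp [hall]
    exact (sub_eq_zero.mp hz).symm
  obtain ⟨i1, hi1⟩ := hex1
  have hm0' : 1 ≤ Psum n γ ((i1:ℕ)+1) - d ((i1:ℕ)+1) := by
    have h := Psum_combo_ge n C1 i1
    rw [← hC1, ← eflip, Psum_sub, hdd] at h
    have h1' : (1:ℤ) ≤ (C1 i1:ℤ) := by exact_mod_cast Nat.one_le_iff_ne_zero.mpr hi1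
    linarith
  have hm0a : (a:ℕ) < (i1:ℕ)+1 ∧ (i1:ℕ)+1 ≤ (b:ℕ) ∧ d ((i1:ℕ)+1) = 0 := by
    have h0 := hd0 ((i1:ℕ)+1)
    rw [hgval ((i1:ℕ)+1)] at hm0'
    split_ifs at hm0' <;> omega
  rw [hγeq]
  exact core_decomp n ν hν a b habv d hd0 hd1 hdout hstar hgap _ hm1 _ hm0a.1 hm0a.2.1 hm0a.2.2
end

section
/- Let m ∈ ℕ and t := t_{m+1}. Let λ ∈ X be dominant and μ ∈ X be such that μ ≠ t(μ), the untwisted Bruhat edge between μ and t(μ) is directed toward t(μ), and t(μ) ≤ λ. Let r := r_{β,c'} (β ∈ Φ⁺, c' ∈ ℤ) be an affine reflection with r ≠ t and r∘t = t∘r (as maps X → X), such that r(μ) ≠ μ and the edge between r(μ) and μ is directed toward μ in Γ^m. Then r(μ) ◁ μ and r(t(μ)) ◁ t(μ), i.e., the untwisted Bruhat edges between r(μ) and μ and between r(t(μ)) and t(μ) point toward μ and toward t(μ), respectively. -/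
open scoped BigOperators

namespace TypeATwisted

/-- `ℤ^{n+1}`. -/
abbrev V (n : ℕ) := Fin (n + 1) → ℤ

/-- The vector `(1,…,1)`. -/
def onesV (n : ℕ) : V n := fun _ => 1

/-- The subgroup `ℤ·(1,…,1)`. -/
def lineZ (n : ℕ) : AddSubgroup (V n) := AddSubgroup.zmultiples (onesV n)

/-- The weight lattice `X = ℤ^{n+1}/ℤ·(1,…,1)` of `SL_{n+1}`. -/
abbrev X (n : ℕ) := V n ⧸ lineZ n

/-- The quotient map `ℤ^{n+1} → X`. -/
def toX (n : ℕ) : V n →+ X n := QuotientAddGroup.mk' (lineZ n)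

/-- The positive root `e_a − e_b` (for `a < b`) as a vector in `ℤ^{n+1}`. -/
def posRootV (n : ℕ) (a b : Fin (n + 1)) : V n := Pi.single a 1 - Pi.single b 1

/-- The positive root `e_a − e_b` (for `a < b`) as an element of `X`. -/
def posRootX (n : ℕ) (a b : Fin (n + 1)) : X n := toX n (posRootV n a b)

/-- The pairing `μ ↦ μ_a − μ_b` on `ℤ^{n+1}`. -/
def pairV (n : ℕ) (a b : Fin (n + 1)) : V n →+ ℤ :=
  (Pi.evalAddMonoidHom (fun _ => ℤ) a) - (Pi.evalAddMonoidHom (fun _ => ℤ) b)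

lemma pairV_ker (n : ℕ) (a b : Fin (n + 1)) : ∀ v ∈ lineZ n, pairV n a b v = 0 := by
  intro v hv
  rw [lineZ, AddSubgroup.mem_zmultiples_iff] at hv
  obtain ⟨k, rfl⟩ := hv
  simp [pairV, onesV]

/-- The pairing `⟨μ, β^∨⟩ = μ_a − μ_b` for the positive root `β = e_a − e_b`,
well defined on `X`. -/
def pairX (n : ℕ) (a b : Fin (n + 1)) : X n →+ ℤ :=
  QuotientAddGroup.lift (lineZ n) (pairV n a b) (pairV_ker n a b)

/-- The root lattice `ℤΦ ⊆ X`. -/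
def rootLattice (n : ℕ) : AddSubgroup (X n) :=
  AddSubgroup.closure {x | ∃ a b : Fin (n + 1), a < b ∧ x = posRootX n a b}

/-- `μ ∈ X` is dominant if it has a weakly decreasing representative. -/
def IsDominant (n : ℕ) (μ : X n) : Prop := ∃ v : V n, Antitone v ∧ toX n v = μ

/-- `μ ≤ λ` iff `λ − μ ∈ ℤΦ` and `μ` lies in the convex hull of the `S_{n+1}`-orbit
of `λ` inside `ℝ^{n+1}/ℝ·(1,…,1)`. -/
def wle (n : ℕ) (μ lam : X n) : Prop :=
  lam - μ ∈ rootLattice n ∧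
  ∃ u v : V n, toX n u = μ ∧ toX n v = lam ∧ ∃ c : ℝ,
    (fun i => (u i : ℝ) + c) ∈
      convexHull ℝ {w : Fin (n + 1) → ℝ |
        ∃ σ : Equiv.Perm (Fin (n + 1)), w = fun i => (v (σ i) : ℝ)}

/-- The untwisted Bruhat edge between `μ − kβ` and `μ` points toward `μ`
(`β = e_a − e_b`, `a < b`, `k ≠ 0`): `⟨μ,β^∨⟩ ≥ k > 0` or `⟨μ,β^∨⟩ < k < 0`. -/
def edgeToward (n : ℕ) (a b : Fin (n + 1)) (k : ℤ) (μ : X n) : Prop :=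
  (0 < k ∧ k ≤ pairX n a b μ) ∨ (k < 0 ∧ pairX n a b μ < k)

/-- The edge between `μ − kβ` and `μ` is `m`-twisted: `β = α_{j,n}` (i.e. `b` is the
last index), and with `c := k − ⟨μ,β^∨⟩` one has `c ≥ 1` and `(c−1)·n + j ≤ m`,
where `j = a + 1` (`1`-based). -/
def IsTwisted (n : ℕ) (m : ℕ∞) (a b : Fin (n + 1)) (k : ℤ) (μ : X n) : Prop :=
  b = Fin.last n ∧ 1 ≤ k - pairX n a b μ ∧
  (((k - pairX n a b μ - 1).toNat * n + (a : ℕ) + 1 : ℕ) : ℕ∞) ≤ m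

/-- In the `m`-twisted Bruhat graph `Γ^m`, the edge between `μ − kβ` and `μ` is directed
toward `μ` iff exactly one of `(μ−kβ) ◁ μ` and `m`-twistedness holds.  (`m = 0` gives
the untwisted Bruhat graph.) -/
def dirToward (n : ℕ) (m : ℕ∞) (a b : Fin (n + 1)) (k : ℤ) (μ : X n) : Prop :=
  Xor' (edgeToward n a b k μ) (IsTwisted n m a b k μ)

/-- The edge between `ν` and `μ` is directed toward `μ` in `Γ^m`. -/
def EdgeDirToward (n : ℕ) (m : ℕ∞) (ν μ : X n) : Prop :=
  ∃ a b : Fin (n + 1), a < b ∧ ∃ k : ℤ, k ≠ 0 ∧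
    ν = μ - k • posRootX n a b ∧ dirToward n m a b k μ

/-- `Arr_m(μ,λ)`: the number of pairs `(β,k) ∈ Φ⁺ × (ℤ∖{0})` with `μ − kβ ≤ λ` and the
edge between `μ − kβ` and `μ` directed toward `μ` in `Γ^m`. -/
noncomputable def ArrRes (n : ℕ) (m : ℕ∞) (μ lam : X n) : ℕ :=
  {p : (Fin (n + 1) × Fin (n + 1)) × ℤ | p.1.1 < p.1.2 ∧ p.2 ≠ 0 ∧
    wle n (μ - p.2 • posRootX n p.1.1 p.1.2) lam ∧
    dirToward n m p.1.1 p.1.2 p.2 μ}.ncard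

/-- `Arr_m(μ)`: the number of pairs `(β,k) ∈ Φ⁺ × (ℤ∖{0})` with the edge between
`μ − kβ` and `μ` directed toward `μ` in `Γ^m`. -/
noncomputable def Arr (n : ℕ) (m : ℕ∞) (μ : X n) : ℕ :=
  {p : (Fin (n + 1) × Fin (n + 1)) × ℤ | p.1.1 < p.1.2 ∧ p.2 ≠ 0 ∧
    dirToward n m p.1.1 p.1.2 p.2 μ}.ncard

/-- The affine reflection `r_{β,c}(ν) = ν − (c + ⟨ν,β^∨⟩)·β` for `β = e_a − e_b`. -/
def areflect (n : ℕ) (a b : Fin (n + 1)) (c : ℤ) : X n → X n :=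
  fun ν => ν - (c + pairX n a b ν) • posRootX n a b

/-- `ℓ^β(μ)`: `⟨μ,β^∨⟩` if `⟨μ,β^∨⟩ ≥ 0`, and `−⟨μ,β^∨⟩ − 1` otherwise. -/
def ellBeta (n : ℕ) (a b : Fin (n + 1)) (μ : X n) : ℕ :=
  if 0 ≤ pairX n a b μ then (pairX n a b μ).toNat else (-(pairX n a b μ) - 1).toNat

end TypeATwisted

/-! Comparing `r ∘ t` with `t ∘ r` at `ν` gives
`(c + ⟨ν,α^∨⟩)⟨α,β^∨⟩ • β = (c' + ⟨ν,β^∨⟩)⟨β,α^∨⟩ • α` for the roots `α` of `t` and `β` of `r`.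
Since a nonzero multiple of one positive root determines the root and the multiple, two distinct
commuting reflections have orthogonal roots. In type A, `β ⊥ α_{j,n}` means that `β` is not of the
form `α_{i,n}`, so no edge in direction `β` is twisted and `Γ^m` orients it as the untwisted graph
does; and `t` preserves `⟨·,β^∨⟩`, so the edge at `t(μ)` is oriented like the edge at `μ`. -/

namespace TypeATwisted

variable {n : ℕ}

lemma pairX_toX (x y : Fin (n + 1)) (v : V n) : pairX n x y (toX n v) = v x - v y := rfl

lemma pairX_posRootX (x y u w : Fin (n + 1)) :
    pairX n x y (posRootX n u w) =
      ((if x = u then 1 else 0) - (if x = w then 1 else 0))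
        - ((if y = u then 1 else 0) - (if y = w then 1 else 0)) := by
  simp only [posRootX, posRootV, map_sub, pairX_toX, Pi.single_apply]
  ring

lemma pairX_posRootX_self {x y : Fin (n + 1)} (h : x ≠ y) : pairX n x y (posRootX n x y) = 2 := by
  simp [pairX_posRootX, h, h.symm]

lemma sum_posRootV (x y : Fin (n + 1)) : ∑ i, posRootV n x y i = 0 := by
  simp [posRootV, Finset.sum_sub_distrib]

lemma eq_of_toX_eq {u w : V n} (h : toX n u = toX n w)
    (hu : ∑ i, u i = 0) (hw : ∑ i, w i = 0) : u = w := by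
  obtain ⟨z, hz, rfl⟩ := (QuotientAddGroup.mk'_eq_mk' _).mp h
  obtain ⟨j, rfl⟩ := AddSubgroup.mem_zmultiples_iff.mp hz
  have hj : j * (n + 1 : ℤ) = 0 := by simpa [Finset.sum_add_distrib, hu, onesV, mul_comm] using hw
  obtain rfl : j = 0 := (mul_eq_zero.mp hj).resolve_right (by positivity)
  simp

lemma smul_posRootX_inj {x y x' y' : Fin (n + 1)} {k k' : ℤ} (hxy : x < y) (hxy' : x' < y')
    (hk : k ≠ 0) (h : k • posRootX n x y = k' • posRootX n x' y') :
    x = x' ∧ y = y' ∧ k = k' := by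
  have hv : k • posRootV n x y = k' • posRootV n x' y' := by
    refine eq_of_toX_eq (by simpa only [posRootX, map_zsmul] using h) ?_ ?_ <;>
      simp [← Finset.mul_sum, sum_posRootV]
  have ev (i : Fin (n + 1)) := congrFun hv i
  simp only [posRootV, Pi.smul_apply, Pi.sub_apply, Pi.single_apply, smul_eq_mul] at ev
  have ex := ev x; have ey := ev y; have ex' := ev x'
  rw [Fin.lt_def] at hxy hxy'
  simp only [Fin.ext_iff] at ex ey ex' ⊢
  split_ifs at ex ey ex' <;> omega

lemma areflect_apply (a b : Fin (n + 1)) (c : ℤ) (ν : X n) :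
    areflect n a b c ν = ν - (c + pairX n a b ν) • posRootX n a b := rfl

lemma edgeDirToward_areflect_iff {m : ℕ∞} {a b : Fin (n + 1)} (hab : a < b) (c : ℤ) (ν : X n) :
    EdgeDirToward n m (areflect n a b c ν) ν ↔
      c + pairX n a b ν ≠ 0 ∧ dirToward n m a b (c + pairX n a b ν) ν := by
  constructor
  · rintro ⟨x, y, hxy, k, hk, hν, hdir⟩
    rw [areflect_apply, sub_right_inj] at hν
    obtain ⟨rfl, rfl, rfl⟩ := smul_posRootX_inj hxy hab hk hν.symm
    exact ⟨hk, hdir⟩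
  · rintro ⟨hk, hdir⟩
    exact ⟨a, b, hab, _, hk, rfl, hdir⟩

lemma dirToward_iff_of_not_isTwisted {m : ℕ∞} {a b : Fin (n + 1)} {k : ℤ} {ν : X n}
    (h : ¬ IsTwisted n m a b k ν) : dirToward n m a b k ν ↔ edgeToward n a b k ν := by
  show Xor _ _ ↔ _
  simp [xor_def, h]

lemma dirToward_zero_iff {a b : Fin (n + 1)} {k : ℤ} {ν : X n} :
    dirToward n 0 a b k ν ↔ edgeToward n a b k ν :=
  dirToward_iff_of_not_isTwisted (by rintro ⟨-, -, h⟩; simp at h)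

lemma edgeToward_congr {a b : Fin (n + 1)} {k : ℤ} {ν ν' : X n}
    (h : pairX n a b ν = pairX n a b ν') : edgeToward n a b k ν ↔ edgeToward n a b k ν' := by
  simp only [edgeToward, h]

lemma pairX_areflect_of_pairX_eq_zero {a b a' b' : Fin (n + 1)}
    (h : pairX n a' b' (posRootX n a b) = 0) (c : ℤ) (ν : X n) :
    pairX n a' b' (areflect n a b c ν) = pairX n a' b' ν := by
  simp [areflect_apply, h]

lemma ne_of_pairX_posRootX_eq_zero {a b a' b' : Fin (n + 1)} (hab : a < b) (hab' : a' < b')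
    (h : pairX n a' b' (posRootX n a b) = 0) : b' ≠ b := by
  rintro rfl
  rw [pairX_posRootX, if_neg hab'.ne, if_neg hab.ne', if_pos rfl] at h
  split_ifs at h <;> omega

lemma smul_posRootX_eq_of_comm {a b a' b' : Fin (n + 1)} {c c' : ℤ}
    (h : areflect n a' b' c' ∘ areflect n a b c = areflect n a b c ∘ areflect n a' b' c') (ν : X n) :
    ((c + pairX n a b ν) * pairX n a' b' (posRootX n a b)) • posRootX n a' b'
      = ((c' + pairX n a' b' ν) * pairX n a b (posRootX n a' b')) • posRootX n a b := by
  have h := congrFun h ν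
  simp only [Function.comp_apply, areflect_apply, map_sub, map_zsmul, smul_eq_mul] at h
  linear_combination (norm := module) h

lemma pairX_posRootX_eq_zero_of_comm {a b a' b' : Fin (n + 1)} (hab : a < b) (hab' : a' < b')
    {c c' : ℤ} (hne : areflect n a' b' c' ≠ areflect n a b c)
    (hcomm : areflect n a' b' c' ∘ areflect n a b c = areflect n a b c ∘ areflect n a' b' c') :
    pairX n a' b' (posRootX n a b) = 0 := by
  by_contra h0
  obtain ⟨ν, hν⟩ : ∃ ν, c + pairX n a b ν ≠ 0 := by
    by_cases hc : c = 0
    · exact ⟨posRootX n a b, by simp [hc, pairX_posRootX_self hab.ne]⟩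
    · exact ⟨0, by simpa⟩
  obtain ⟨rfl, rfl, hcoeff⟩ :=
    smul_posRootX_inj hab' hab (mul_ne_zero hν h0) (smul_posRootX_eq_of_comm hcomm ν)
  obtain rfl : c' = c := by
    rw [pairX_posRootX_self hab.ne] at hcoeff
    omega
  exact hne rfl

end TypeATwisted

open TypeATwisted

theorem statement6_general (n m : ℕ)
    (a : Fin (n + 1)) (c : ℤ) (ha : (a : ℕ) < n)
    (t : X n → X n) (htdef : t = areflect n a (Fin.last n) c)
    (μ : X n)
    (a' b' : Fin (n + 1)) (hab : a' < b') (c' : ℤ)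
    (r : X n → X n) (hrdef : r = areflect n a' b' c')
    (hrt : r ≠ t) (hcomm : r ∘ t = t ∘ r)
    (hredge : EdgeDirToward n (m : ℕ∞) (r μ) μ) :
    EdgeDirToward n 0 (r μ) μ ∧ EdgeDirToward n 0 (r (t μ)) (t μ) := by
  subst htdef hrdef
  have hα : a < Fin.last n := ha
  obtain ⟨hk, hdir⟩ := (edgeDirToward_areflect_iff hab c' μ).mp hredge
  have horth := pairX_posRootX_eq_zero_of_comm hα hab hrt hcomm
  have hb' := ne_of_pairX_posRootX_eq_zero hα hab horth
  have htoward := (dirToward_iff_of_not_isTwisted (hb' ·.1)).mp hdir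
  have hpair := pairX_areflect_of_pairX_eq_zero horth c μ
  refine ⟨(edgeDirToward_areflect_iff hab c' μ).mpr ⟨hk, dirToward_zero_iff.mpr htoward⟩,
    (edgeDirToward_areflect_iff hab c' _).mpr ?_⟩
  rw [hpair, dirToward_zero_iff, edgeToward_congr hpair]
  exact ⟨hk, htoward⟩

/-- cf. the commuting case of the wall-crossing lemma: let
`t = t_{m+1} = r_{α_{j,n},c}` with `(c−1)·n + j = m + 1`, let `λ` be dominant, `μ` with
`μ ≠ t(μ)`, the untwisted edge between `μ` and `t(μ)` directed toward `t(μ)`, and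
`t(μ) ≤ λ`.  If `r = r_{β,c'}` is an affine reflection with `r ≠ t`, `r∘t = t∘r`,
`r(μ) ≠ μ`, and the edge between `r(μ)` and `μ` directed toward `μ` in `Γ^m`, then the
untwisted edges between `r(μ)` and `μ` and between `r(t(μ))` and `t(μ)` point toward `μ`
and toward `t(μ)`, respectively. -/
theorem statement6 (n m : ℕ) (hn : 2 ≤ n)
    (a : Fin (n + 1)) (c : ℤ) (ha : (a : ℕ) < n) (hc : 1 ≤ c)
    (hidx : (c - 1) * (n : ℤ) + ((a : ℕ) + 1) = (m : ℤ) + 1)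
    (t : X n → X n) (htdef : t = areflect n a (Fin.last n) c)
    (lam μ : X n) (hlam : IsDominant n lam)
    (hne : μ ≠ t μ)
    (hdir : EdgeDirToward n 0 μ (t μ))
    (hle : wle n (t μ) lam)
    (a' b' : Fin (n + 1)) (hab : a' < b') (c' : ℤ)
    (r : X n → X n) (hrdef : r = areflect n a' b' c')
    (hrt : r ≠ t) (hcomm : r ∘ t = t ∘ r)
    (hrμ : r μ ≠ μ)
    (hredge : EdgeDirToward n (m : ℕ∞) (r μ) μ) :
    EdgeDirToward n 0 (r μ) μ ∧ EdgeDirToward n 0 (r (t μ)) (t μ) :=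
  statement6_general n m a c ha t htdef μ a' b' hab c' r hrdef hrt hcomm hredge
end
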